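/- arXiv:1105.1178 — 3 statements merged into one kernel-verified Lean document; each statement's English description precedes it below -/
import Mathlib

section
/- Let Θ(x_i,x_j) = θ10·x_i·(1-x_j) + θ01·(1-x_i)·x_j with θ10 ≥ a and θ01 ≥ b + f, where a, b, f are nonnegative reals. If the incoming variable-to-factor message is m(x_i) with m(0) = a and m(1) = b + f, then the min-sum outgoing message μ(x_j) = min_{x_i ∈ {0,1}} [Θ(x_i,x_j) + m(x_i)] satisfies μ(0) = a and μ(1) = b + f; i.e., the factor propagates the message unchanged. -/
/-- Lemma 1 (Message-Preserving Factors): the factor propagates the message unchanged. -/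
theorem message_preserving_factors (θ10 θ01 a b f : ℝ)
    (ha : 0 ≤ a) (hb : 0 ≤ b) (hf : 0 ≤ f)
    (h10 : a ≤ θ10) (h01 : b + f ≤ θ01) :
    let Θ : ℝ → ℝ → ℝ := fun xi xj => θ10 * xi * (1 - xj) + θ01 * (1 - xi) * xj
    min (Θ 0 0 + a) (Θ 1 0 + (b + f)) = a ∧
    min (Θ 0 1 + a) (Θ 1 1 + (b + f)) = b + f := by
  intro Θ
  have hΘ00 : Θ 0 0 = 0 := by norm_num [Θ]
  have hΘ10 : Θ 1 0 = θ10 := by norm_num [Θ]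
  have hΘ01 : Θ 0 1 = θ01 := by norm_num [Θ]
  have hΘ11 : Θ 1 1 = 0 := by norm_num [Θ]
  rw [hΘ00, hΘ10, hΘ01, hΘ11, zero_add, zero_add]
  exact ⟨min_eq_left (by linarith), min_eq_right (by linarith)⟩
end

section
/- Let Θ(x_i,x_j) = θ10·x_i·(1-x_j) + θ01·(1-x_i)·x_j with θ10, θ01 ≥ 0 (submodular canonical form). If the incoming message is m(x_i) = (α, 0) with α ≥ 0, then the min-sum outgoing message is μ(x_j) = (min(α, θ10), 0); in particular, messages of the form (nonnegative, 0) are closed under passage through submodular canonical-form factors. -/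
/-- Iterated homogeneity key step: messages of the form (nonnegative, 0) are closed
under passage through submodular canonical-form factors. -/
theorem homogeneous_message_closure (θ10 θ01 α : ℝ)
    (h10 : 0 ≤ θ10) (h01 : 0 ≤ θ01) (hα : 0 ≤ α) :
    let Θ : ℝ → ℝ → ℝ := fun xi xj => θ10 * xi * (1 - xj) + θ01 * (1 - xi) * xj
    min (Θ 0 0 + α) (Θ 1 0 + 0) = min α θ10 ∧
    min (Θ 0 1 + α) (Θ 1 1 + 0) = 0 ∧
    0 ≤ min α θ10 := by
  intro Θ
  have hΘ00 : Θ 0 0 = 0 := by simp [Θ]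
  have hΘ10 : Θ 1 0 = θ10 := by simp [Θ]
  have hΘ01 : Θ 0 1 = θ01 := by simp [Θ]
  have hΘ11 : Θ 1 1 = 0 := by simp [Θ]
  rw [hΘ00, hΘ10, hΘ01, hΘ11, zero_add, add_zero, add_zero]
  exact ⟨rfl, min_eq_right (add_nonneg h01 hα), le_min hα h10⟩
end

section
/- Let E be the energy of the canonical 4-variable counterexample: variables x_1,…,x_4 ∈ {0,1} on a cycle with symmetric pairwise potentials Θ_{12}, Θ_{23}, Θ_{34}, Θ_{41}, each Θ(x,y) = λ·|x−y| (equivalently λ·(x(1−y)+(1−x)y)), unary potentials Θ_1(x_1) = a·(1−x_1), Θ_4(x_4) = a·(1−x_4), Θ_2(x_2) = b·x_2, Θ_3(x_3) = b·x_3, with λ > 2a > 2b > 0. Then the unique minimizer of E is the all-ones assignment (1,1,1,1). -/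
/-!
The energy is its unary part plus `λ` times the number of cut edges of the cycle. A labelling of a
cycle cuts an even number of edges, and none only if it is constant. So a labelling other than the
two constant ones cuts at least two edges and costs at least `2λ > 4a > 2b`, while the all-zeros
labelling costs `2a > 2b`; and `2b` is the energy of the all-ones labelling.
-/

open Finset

section CycleCut

variable {n : ℕ}

/-- The edges `{i, i + 1}` of the cycle on `Fin (n + 1)` whose endpoints get different labels. -/
def cycleCut (x : Fin (n + 1) → Bool) : Finset (Fin (n + 1)) := {i | x i ≠ x (i + 1)}

theorem even_card_cycleCut (x : Fin (n + 1) → Bool) : Even #(cycleCut x) := by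
  let φ : Bool → ZMod 2 := fun v => if v then 1 else 0
  have hxor : ∀ u v : Bool, (if u ≠ v then 1 else 0 : ZMod 2) = φ u + φ v := by decide
  have hshift := Equiv.sum_comp (Equiv.addRight (1 : Fin (n + 1))) fun i => φ (x i)
  simp only [Equiv.coe_addRight] at hshift
  rw [← ZMod.natCast_eq_zero_iff_even, cycleCut, ← sum_boole]
  calc ∑ i, (if x i ≠ x (i + 1) then 1 else 0 : ZMod 2)
      = ∑ i, φ (x i) + ∑ i, φ (x (i + 1)) := by simp only [hxor, sum_add_distrib]
    _ = 2 * ∑ i, φ (x i) := by rw [hshift, two_mul]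
    _ = 0 := by rw [show (2 : ZMod 2) = 0 from rfl, zero_mul]

theorem cycleCut_eq_empty_iff (x : Fin (n + 1) → Bool) :
    cycleCut x = ∅ ↔ x = fun _ => x 0 := by
  simp only [cycleCut, filter_eq_empty_iff, mem_univ, true_implies, not_not]
  constructor
  · intro hstep
    funext i
    induction i using Fin.induction with
    | zero => rfl
    | succ i ih => rw [← Fin.coeSucc_eq_succ, ← hstep, ih]
  · intro hconst i
    rw [hconst]

theorem two_le_card_cycleCut (x : Fin (n + 1) → Bool) (hx : cycleCut x ≠ ∅) :
    2 ≤ #(cycleCut x) := by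
  obtain ⟨k, hk⟩ := even_card_cycleCut x
  have : #(cycleCut x) ≠ 0 := by rwa [Ne, card_eq_zero]
  omega

theorem sum_abs_ite_sub_ite_eq_card_cycleCut (x : Fin (n + 1) → Bool) :
    ∑ i, |(if x i then 1 else 0 : ℝ) - if x (i + 1) then 1 else 0| = #(cycleCut x) := by
  have habs : ∀ u v : Bool,
      |(if u then 1 else 0 : ℝ) - if v then 1 else 0| = if u ≠ v then 1 else 0 := by
    intro u v; cases u <;> cases v <;> simp
  simp only [habs, sum_boole, cycleCut]

end CycleCut

theorem unary_energy_nonneg {a b : ℝ} (ha : 0 ≤ a) (hb : 0 ≤ b) (u v w z : Bool) :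
    0 ≤ a * (1 - if u then 1 else 0) + b * (if v then 1 else 0) + b * (if w then 1 else 0)
      + a * (1 - if z then 1 else 0) := by
  cases u <;> cases v <;> cases w <;> cases z <;> norm_num <;> positivity

/-- The canonical 4-variable cycle counterexample: with λ > 2a > 2b > 0, the unique
minimizer of the energy is the all-ones assignment. -/
theorem canonical_counterexample_optimum (a b lam : ℝ)
    (hb : 0 < 2 * b) (hab : 2 * b < 2 * a) (hlam : 2 * a < lam) :
    let ind : Bool → ℝ := fun v => if v then 1 else 0
    let E : (Fin 4 → Bool) → ℝ := fun x =>
      a * (1 - ind (x 0)) + b * ind (x 1) + b * ind (x 2) + a * (1 - ind (x 3))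
        + lam * |ind (x 0) - ind (x 1)| + lam * |ind (x 1) - ind (x 2)|
        + lam * |ind (x 2) - ind (x 3)| + lam * |ind (x 3) - ind (x 0)|
    ∀ x : Fin 4 → Bool, x ≠ (fun _ => true) → E (fun _ => true) < E x := by
  intro ind E x hx
  have hE (y : Fin 4 → Bool) : E y = a * (1 - ind (y 0)) + b * ind (y 1) + b * ind (y 2)
      + a * (1 - ind (y 3)) + lam * #(cycleCut y) := by
    rw [← sum_abs_ite_sub_ite_eq_card_cycleCut, Fin.sum_univ_four]
    simp only [E, ind, Fin.reduceAdd]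
    ring
  rw [hE x, hE fun _ => true, (cycleCut_eq_empty_iff _).2 rfl]
  by_cases hcut : cycleCut x = ∅
  · have hconst := (cycleCut_eq_empty_iff x).1 hcut
    rcases Bool.eq_false_or_eq_true (x 0) with h0 | h0
    · exact absurd (h0 ▸ hconst) hx
    · rw [hcut, hconst, h0]
      norm_num [ind]
      linarith
  · have hcut2 : (2 : ℝ) ≤ #(cycleCut x) := by exact_mod_cast two_le_card_cycleCut x hcut
    have hunary := unary_energy_nonneg (a := a) (b := b) (by linarith) (by linarith)
      (x 0) (x 1) (x 2) (x 3)
    have := mul_le_mul_of_nonneg_left hcut2 (by linarith : 0 ≤ lam)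
    norm_num [ind] at hunary ⊢
    linarith
end
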